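/- arXiv:1605.08530 — 3 statements merged into one kernel-verified Lean document; each statement's English description precedes it below -/
import Mathlib

section
/- Let W₁, …, W_m : ℝ² → ℝ² be smooth (2πℤ)²-periodic vector fields, let Z = W₁ + ⋯ + W_m, and let L be a Lipschitz constant for Z. For a smooth periodic vector field V let φᵗ_V : ℝ² → ℝ² denote its flow (the global solution of d/dt φᵗ_V(p) = V(φᵗ_V(p)), φ⁰_V(p) = p). Then there exists a constant C, depending only on the vector fields W₁, …, W_m, such that for all t ∈ [0,1] and all p ∈ ℝ²: ‖φᵗ_Z(p) − (φᵗ_{W_m} ∘ ⋯ ∘ φᵗ_{W_1})(p)‖ ≤ (t²/2)·C·e^{L·t}. -/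
open scoped Real
open Set

noncomputable section

/-- The plane ℝ² with its Euclidean structure. -/
abbrev E2 : Type := EuclideanSpace ℝ (Fin 2)

/-- The lattice vector `2π·m ∈ 2πℤ² ⊆ ℝ²` associated to an integer vector `m`. -/
def lat (m : Fin 2 → ℤ) : E2 := (WithLp.equiv 2 (Fin 2 → ℝ)).symm fun i => 2 * π * (m i)

/-- Composition of a list of maps, applying the head of the list first. -/
def seqComp (gs : List (E2 → E2)) : E2 → E2 := gs.foldl (fun acc g => g ∘ acc) id

/- ### Auxiliary lemmas -/

lemma foldl_comp_apply (gs : List (E2 → E2)) (f : E2 → E2) (p : E2) :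
    (gs.foldl (fun acc g => g ∘ acc) f) p = gs.foldl (fun q g => g q) (f p) := by
  induction gs generalizing f with
  | nil => rfl
  | cons g gs ih =>
    simp only [List.foldl_cons]
    exact ih (g ∘ f)

lemma seqComp_eq_iter (m : ℕ) (g : Fin m → E2 → E2) (p : E2) :
    seqComp (List.ofFn g) p
      = Nat.rec (motive := fun _ => E2) p
          (fun k xk => if h : k < m then g ⟨k, h⟩ xk else xk) m := by
  set x : ℕ → E2 := fun n => Nat.rec (motive := fun _ => E2) p
      (fun k xk => if h : k < m then g ⟨k, h⟩ xk else xk) n with hx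
  have key : ∀ n (hn : n ≤ m),
      (List.ofFn fun i : Fin n => g (Fin.castLE hn i)).foldl (fun q g => g q) p = x n := by
    intro n
    induction n with
    | zero => intro hn; simp only [List.ofFn_zero, List.foldl_nil]; rfl
    | succ n ih =>
      intro hn
      rw [List.ofFn_succ']
      simp only [List.concat_eq_append, List.foldl_append, List.foldl_cons, List.foldl_nil]
      have hcast : (fun i : Fin n => g (Fin.castLE hn (Fin.castSucc i)))
          = fun i : Fin n => g (Fin.castLE (Nat.le_of_succ_le hn) i) := by
        funext i; congr 1
      have hlt : n < m := Nat.lt_of_succ_le hn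
      have hlast : Fin.castLE hn (Fin.last n) = (⟨n, hlt⟩ : Fin m) := rfl
      rw [hlast]
      have hxn : x (n + 1) = g ⟨n, hlt⟩ (x n) := by
        simp only [hx]
        exact dif_pos hlt
      rw [hxn, ← ih (Nat.le_of_succ_le hn)]
      congr 1
  have h2 : (fun i : Fin m => g (Fin.castLE le_rfl i)) = g := funext fun i => rfl
  have h3 := key m le_rfl
  rw [h2] at h3
  rw [seqComp, foldl_comp_apply, id_eq]
  exact h3

/-- A continuous real-valued function periodic with respect to the lattice `2πℤ²` is bounded. -/
lemma periodic_bound (g : E2 → ℝ) (hg : Continuous g)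
    (hper : ∀ (x : E2) (k : Fin 2 → ℤ), g (x + lat k) = g x) :
    ∃ B : ℝ, 0 ≤ B ∧ ∀ x, g x ≤ B := by
  obtain ⟨B, hB⟩ :=
    (isCompact_closedBall (0 : E2) (4 * π)).exists_bound_of_continuousOn hg.continuousOn
  refine ⟨max B 0, le_max_right _ _, fun x => ?_⟩
  have h2π : (0 : ℝ) < 2 * π := by positivity
  set k : Fin 2 → ℤ := fun i => ⌊x i / (2 * π)⌋ with hk
  set y : E2 := x - lat k with hy
  have hgy : g x = g y := by
    have h := hper y k
    have : y + lat k = x := by rw [hy]; abel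
    rw [this] at h
    exact h
  have hcoord : ∀ i : Fin 2, ‖y i‖ ≤ 2 * π := by
    intro i
    have hyi : y i = x i - ⌊x i / (2 * π)⌋ * (2 * π) := by
      rw [hy]
      have : (x - lat k) i = x i - (lat k) i := rfl
      rw [this]
      have : (lat k) i = 2 * π * (k i) := rfl
      rw [this, hk]
      ring
    have h1 := Int.sub_floor_div_mul_nonneg (x i) h2π
    have h2 := Int.sub_floor_div_mul_lt (x i) h2π
    rw [Real.norm_eq_abs, hyi, abs_of_nonneg h1]
    linarith
  have hmem : y ∈ Metric.closedBall (0 : E2) (4 * π) := by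
    rw [Metric.mem_closedBall, dist_zero_right, EuclideanSpace.norm_eq]
    have hsum : ∑ i : Fin 2, ‖y i‖ ^ 2 ≤ ∑ _i : Fin 2, (2 * π) ^ 2 := by
      apply Finset.sum_le_sum
      intro i _
      have := hcoord i
      nlinarith [norm_nonneg (y i)]
    have : ∑ _i : Fin 2, (2 * π) ^ 2 = 2 * (2 * π) ^ 2 := by
      simp [Finset.sum_const]
    have hle : ∑ i : Fin 2, ‖y i‖ ^ 2 ≤ (4 * π) ^ 2 := by
      rw [this] at hsum; nlinarith [Real.pi_pos]
    calc Real.sqrt (∑ i : Fin 2, ‖y i‖ ^ 2) ≤ Real.sqrt ((4 * π) ^ 2) :=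
          Real.sqrt_le_sqrt hle
      _ = 4 * π := Real.sqrt_sq (by positivity)
  calc g x = g y := hgy
    _ ≤ ‖g y‖ := by rw [Real.norm_eq_abs]; exact le_abs_self _
    _ ≤ B := hB y hmem
    _ ≤ max B 0 := le_max_left _ _

/-- A smooth lattice-periodic vector field is globally Lipschitz (with nonneg constant). -/
lemma periodic_lipschitz (f : E2 → E2) (hf : ContDiff ℝ (⊤ : ℕ∞) f)
    (hper : ∀ (x : E2) (k : Fin 2 → ℤ), f (x + lat k) = f x) :
    ∃ K : ℝ, 0 ≤ K ∧ ∀ a b : E2, ‖f a - f b‖ ≤ K * ‖a - b‖ := by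
  have hdiff : Differentiable ℝ f := hf.differentiable (by simp)
  have hdf : ∀ (x : E2) (k : Fin 2 → ℤ), fderiv ℝ f (x + lat k) = fderiv ℝ f x := by
    intro x k
    have h1 : HasFDerivAt f (fderiv ℝ f (x + lat k)) (x + lat k) :=
      (hdiff (x + lat k)).hasFDerivAt
    have h2 : HasFDerivAt (fun y : E2 => y + lat k) (ContinuousLinearMap.id ℝ E2) x :=
      (hasFDerivAt_id x).add_const _
    have h3 := h1.comp x h2
    have h4 : (f ∘ fun y : E2 => y + lat k) = f := funext fun y => hper y k
    rw [h4] at h3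
    have := h3.fderiv
    simpa using this.symm
  obtain ⟨K, hK0, hK⟩ := periodic_bound (fun x => ‖fderiv ℝ f x‖)
    ((hf.continuous_fderiv (by simp)).norm) (fun x k => by simp [hdf x k])
  refine ⟨K, hK0, fun a b => ?_⟩
  exact Convex.norm_image_sub_le_of_norm_fderiv_le (fun x _ => hdiff x)
    (fun x _ => hK x) convex_univ (mem_univ b) (mem_univ a)

/-- Displacement bound for the flow of a bounded vector field. -/
lemma flow_dist (V : E2 → E2) (φ : ℝ → E2 → E2)
    (h0 : ∀ q, φ 0 q = q)
    (hd : ∀ (s : ℝ) (q : E2), HasDerivAt (fun u => φ u q) (V (φ s q)) s)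
    {B : ℝ} (hB : ∀ y, ‖V y‖ ≤ B) (q : E2) {s : ℝ} (hs : 0 ≤ s) :
    ‖φ s q - q‖ ≤ B * s := by
  have h := Convex.norm_image_sub_le_of_norm_hasDerivWithin_le
    (f := fun u => φ u q) (f' := fun u => V (φ u q)) (s := Icc 0 s)
    (fun u _ => (hd u q).hasDerivWithinAt) (fun u _ => hB _) (convex_Icc 0 s)
    (left_mem_Icc.2 hs) (right_mem_Icc.2 hs)
  simpa [h0 q, Real.norm_eq_abs, abs_of_nonneg hs] using h

/-- Lie–Trotter splitting estimate: for smooth periodic vector fields `W₁, …, W_m` with sum `Z`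
(with Lipschitz constant `L`), the flow of `Z` and the composite of the flows of the `Wᵢ` differ
at time `t ∈ [0,1]` by at most `(t²/2)·C·e^{Lt}`, where `C` depends only on the `Wᵢ`. -/
theorem statement6
    (m : ℕ) (W : Fin m → E2 → E2)
    (hWsm : ∀ i, ContDiff ℝ (⊤ : ℕ∞) (W i))
    (hWper : ∀ i, ∀ (x : E2) (k : Fin 2 → ℤ), W i (x + lat k) = W i x)
    (Z : E2 → E2) (hZ : Z = fun x => ∑ i, W i x)
    (L : ℝ) (hLip : ∀ p q : E2, ‖Z p - Z q‖ ≤ L * ‖p - q‖)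
    (φZ : ℝ → E2 → E2) (hφZ0 : ∀ p, φZ 0 p = p)
    (hφZ : ∀ (t : ℝ) (p : E2), HasDerivAt (fun s => φZ s p) (Z (φZ t p)) t)
    (φW : Fin m → ℝ → E2 → E2) (hφW0 : ∀ i p, φW i 0 p = p)
    (hφW : ∀ i (t : ℝ) (p : E2), HasDerivAt (fun s => φW i s p) (W i (φW i t p)) t) :
    ∃ C : ℝ, ∀ t ∈ Icc (0:ℝ) 1, ∀ p : E2,
      ‖φZ t p - seqComp (List.ofFn fun i => φW i t) p‖ ≤ t ^ 2 / 2 * C * Real.exp (L * t) := by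
  -- bound each `W i` in norm
  have hBex : ∀ i, ∃ b : ℝ, 0 ≤ b ∧ ∀ x, ‖W i x‖ ≤ b := fun i =>
    periodic_bound (fun x => ‖W i x‖) (hWsm i).continuous.norm
      (fun x k => by simp only [hWper i x k])
  choose b hb0 hb using hBex
  set B : ℝ := ∑ i, b i with hBdef
  have hB0 : 0 ≤ B := Finset.sum_nonneg fun i _ => hb0 i
  have hBW : ∀ i x, ‖W i x‖ ≤ B := fun i x =>
    le_trans (hb i x) (Finset.single_le_sum (fun j _ => hb0 j) (Finset.mem_univ i))
  -- Lipschitz constants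
  have hKex : ∀ i, ∃ k : ℝ, 0 ≤ k ∧ ∀ a b : E2, ‖W i a - W i b‖ ≤ k * ‖a - b‖ := fun i =>
    periodic_lipschitz (W i) (hWsm i) (hWper i)
  choose kk hk0 hkk using hKex
  set K : ℝ := ∑ i, kk i with hKdef
  have hK0 : 0 ≤ K := Finset.sum_nonneg fun i _ => hk0 i
  have hKW : ∀ i a c, ‖W i a - W i c‖ ≤ K * ‖a - c‖ := fun i a c =>
    le_trans (hkk i a c) (by
      have : kk i ≤ K := Finset.single_le_sum (fun j _ => hk0 j) (Finset.mem_univ i)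
      exact mul_le_mul_of_nonneg_right this (norm_nonneg _))
  -- bound on Z
  have hZB : ∀ x, ‖Z x‖ ≤ m * B := by
    intro x
    rw [hZ]
    calc ‖∑ i, W i x‖ ≤ ∑ i, ‖W i x‖ := norm_sum_le _ _
      _ ≤ ∑ _i : Fin m, B := Finset.sum_le_sum fun i _ => hBW i x
      _ = m * B := by simp [Finset.sum_const, mul_comm]
  -- L ≥ 0
  have hL0 : 0 ≤ L := by
    have h := hLip 0 (EuclideanSpace.single 0 (1 : ℝ))
    have hn : ‖(0 : E2) - EuclideanSpace.single 0 (1 : ℝ)‖ = 1 := by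
      rw [zero_sub, norm_neg, EuclideanSpace.norm_single]; norm_num
    rw [hn, mul_one] at h
    exact le_trans (norm_nonneg _) h
  refine ⟨2 * (m * (K * ((2 * m + 1) * B))), fun t ht p => ?_⟩
  obtain ⟨ht0, ht1⟩ := ht
  -- the iterated points
  set x : ℕ → E2 := fun n => Nat.rec (motive := fun _ => E2) p
      (fun k xk => if h : k < m then φW ⟨k, h⟩ t xk else xk) n with hxdef
  have hseq : seqComp (List.ofFn fun i => φW i t) p = x m := seqComp_eq_iter m (fun i => φW i t) p
  have hxstep : ∀ i : Fin m, x (i.val + 1) = φW i t (x i.val) := by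
    intro i
    have : x (i.val + 1) = if h : i.val < m then φW ⟨i.val, h⟩ t (x i.val) else x i.val := rfl
    rw [this, dif_pos i.isLt]
  have hx0 : x 0 = p := rfl
  clear_value x
  clear hxdef
  -- distance of iterates to p
  have hxp : ∀ n, n ≤ m → ‖x n - p‖ ≤ n * (B * t) := by
    intro n
    induction n with
    | zero => intro _; rw [hx0]; simp
    | succ n ih =>
      intro hn
      have hlt : n < m := Nat.lt_of_succ_le hn
      have hstep : x (n + 1) = φW ⟨n, hlt⟩ t (x n) := hxstep ⟨n, hlt⟩
      have h1 : ‖x (n + 1) - x n‖ ≤ B * t := by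
        rw [hstep]
        exact flow_dist (W ⟨n, hlt⟩) (φW ⟨n, hlt⟩) (hφW0 _) (hφW _) (hBW _) (x n) ht0
      have h2 := ih (Nat.le_of_succ_le hn)
      calc ‖x (n + 1) - p‖ = ‖(x (n + 1) - x n) + (x n - p)‖ := by abel_nf
        _ ≤ ‖x (n + 1) - x n‖ + ‖x n - p‖ := norm_add_le _ _
        _ ≤ B * t + n * (B * t) := add_le_add h1 h2
        _ = (n + 1 : ℕ) * (B * t) := by push_cast; ring
  -- the comparison function
  set S : ℝ → E2 := fun s => ∑ i : Fin m, (φW i s (x i.val) - x i.val) with hSdef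
  set h : ℝ → E2 := fun s => φZ s p - S s with hhdef
  have hderiv : ∀ s, HasDerivAt h (∑ i : Fin m, (W i (φZ s p) - W i (φW i s (x i.val)))) s := by
    intro s
    have h1 : HasDerivAt (fun u => φZ u p) (Z (φZ s p)) s := hφZ s p
    have h2 : HasDerivAt S (∑ i : Fin m, W i (φW i s (x i.val))) s := by
      apply HasDerivAt.fun_sum
      intro i _
      exact (hφW i s (x i.val)).sub_const _
    have h3 := h1.sub h2
    have heq : Z (φZ s p) - ∑ i : Fin m, W i (φW i s (x i.val))
        = ∑ i : Fin m, (W i (φZ s p) - W i (φW i s (x i.val))) := by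
      rw [hZ, Finset.sum_sub_distrib]
    rw [heq] at h3
    exact h3
  -- bound on the derivative on [0, t]
  have hbound : ∀ s ∈ Icc (0:ℝ) t,
      ‖∑ i : Fin m, (W i (φZ s p) - W i (φW i s (x i.val)))‖
        ≤ m * (K * ((2 * m + 1) * B * t)) := by
    intro s hs
    obtain ⟨hs0, hst⟩ := hs
    have hterm : ∀ i : Fin m,
        ‖W i (φZ s p) - W i (φW i s (x i.val))‖ ≤ K * ((2 * m + 1) * B * t) := by
      intro i
      have hA : ‖φZ s p - p‖ ≤ m * B * s :=
        flow_dist Z φZ hφZ0 hφZ hZB p hs0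
      have hBn : ‖p - x i.val‖ ≤ m * (B * t) := by
        rw [norm_sub_rev]
        calc ‖x i.val - p‖ ≤ i.val * (B * t) := hxp i.val (le_of_lt i.isLt)
          _ ≤ m * (B * t) := by
            have : (i.val : ℝ) ≤ m := by exact_mod_cast (le_of_lt i.isLt)
            exact mul_le_mul_of_nonneg_right this (by positivity)
      have hC : ‖x i.val - φW i s (x i.val)‖ ≤ B * s := by
        rw [norm_sub_rev]
        exact flow_dist (W i) (φW i) (hφW0 i) (hφW i) (hBW i) (x i.val) hs0
      have hsplit : φZ s p - φW i s (x i.val)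
          = (φZ s p - p) + (p - x i.val) + (x i.val - φW i s (x i.val)) := by abel
      have htri : ‖φZ s p - φW i s (x i.val)‖ ≤ (2 * m + 1) * B * t := by
        rw [hsplit]
        have := norm_add₃_le (a := φZ s p - p) (b := p - x i.val)
          (c := x i.val - φW i s (x i.val))
        have hMs : (m : ℝ) * B * s ≤ m * B * t := by
          apply mul_le_mul_of_nonneg_left hst; positivity
        have hBs : B * s ≤ B * t := mul_le_mul_of_nonneg_left hst hB0
        calc ‖(φZ s p - p) + (p - x i.val) + (x i.val - φW i s (x i.val))‖
            ≤ ‖φZ s p - p‖ + ‖p - x i.val‖ + ‖x i.val - φW i s (x i.val)‖ := this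
          _ ≤ m * B * s + m * (B * t) + B * s := by
              exact add_le_add (add_le_add hA hBn) hC
          _ ≤ m * B * t + m * (B * t) + B * t := by
              exact add_le_add (add_le_add hMs le_rfl) hBs
          _ = (2 * m + 1) * B * t := by ring
      calc ‖W i (φZ s p) - W i (φW i s (x i.val))‖
          ≤ K * ‖φZ s p - φW i s (x i.val)‖ := hKW i _ _
        _ ≤ K * ((2 * m + 1) * B * t) := mul_le_mul_of_nonneg_left htri hK0
    calc ‖∑ i : Fin m, (W i (φZ s p) - W i (φW i s (x i.val)))‖
        ≤ ∑ i : Fin m, ‖W i (φZ s p) - W i (φW i s (x i.val))‖ := norm_sum_le _ _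
      _ ≤ ∑ _i : Fin m, K * ((2 * m + 1) * B * t) := Finset.sum_le_sum fun i _ => hterm i
      _ = m * (K * ((2 * m + 1) * B * t)) := by simp [Finset.sum_const, mul_comm]
  -- mean value theorem
  have hMVT := Convex.norm_image_sub_le_of_norm_hasDerivWithin_le
    (f := h) (f' := fun s => ∑ i : Fin m, (W i (φZ s p) - W i (φW i s (x i.val))))
    (s := Icc 0 t) (fun s _ => (hderiv s).hasDerivWithinAt) hbound (convex_Icc 0 t)
    (left_mem_Icc.2 ht0) (right_mem_Icc.2 ht0)
  -- identify h t - h 0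
  have hS0 : S 0 = 0 := by
    simp only [hSdef]
    apply Finset.sum_eq_zero
    intro i _
    rw [hφW0 i (x i.val), sub_self]
  have hSt : S t = x m - p := by
    simp only [hSdef]
    have hsum : ∑ i : Fin m, (φW i t (x i.val) - x i.val)
        = ∑ i : Fin m, (x (i.val + 1) - x i.val) := by
      apply Finset.sum_congr rfl
      intro i _
      rw [hxstep i]
    rw [hsum]
    rw [Fin.sum_univ_eq_sum_range (fun n => x (n + 1) - x n) m]
    rw [Finset.sum_range_sub (fun n => x n) m, hx0]
  have hh0 : h 0 = p := by simp only [hhdef]; simp only [hφZ0 p, hS0, sub_zero]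
  have hht : h t = φZ t p - (x m - p) := by simp only [hhdef]; rw [hSt]
  have hdiff : h t - h 0 = φZ t p - x m := by rw [hht, hh0]; abel
  rw [hdiff] at hMVT
  rw [hseq]
  have hnt : ‖t - 0‖ = t := by rw [sub_zero, Real.norm_eq_abs, abs_of_nonneg ht0]
  rw [hnt] at hMVT
  -- final comparison
  have hexp : (1 : ℝ) ≤ Real.exp (L * t) := by
    rw [← Real.exp_zero]
    exact Real.exp_le_exp.2 (by positivity)
  have hCt : m * (K * ((2 * m + 1) * B * t)) * t
      = t ^ 2 / 2 * (2 * (m * (K * ((2 * m + 1) * B)))) := by ring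
  calc ‖φZ t p - x m‖ ≤ m * (K * ((2 * m + 1) * B * t)) * t := hMVT
    _ = t ^ 2 / 2 * (2 * (m * (K * ((2 * m + 1) * B)))) := hCt
    _ ≤ t ^ 2 / 2 * (2 * (m * (K * ((2 * m + 1) * B)))) * Real.exp (L * t) := by
        apply le_mul_of_one_le_right _ hexp
        positivity
end
end

section
/- Let n ≥ 1 and let X : [0,1] × ℝ² → ℝ² be a smooth time-dependent vector field which is (2πℤ)²-periodic in the space variable and has uniform spatial Lipschitz constant L: ‖X(t,p) − X(t,q)‖ ≤ L·‖p − q‖ for all t, p, q. Let ψ : [0,1] × ℝ² → ℝ² satisfy ψ(0,p) = p and ∂ψ/∂t(t,p) = X(t, ψ(t,p)) for all t, p (the flow of the time-dependent field). For i = 0, …, n−1 set Xᵢ := X(i/n, ·), let φˢ_{Xᵢ} denote the flow of Xᵢ, and define for i/n ≤ t ≤ (i+1)/n the broken flow Θᵗ := φ^{t − i/n}_{Xᵢ} ∘ φ^{1/n}_{X_{i−1}} ∘ ⋯ ∘ φ^{1/n}_{X₀}. Let Mᵢ ≥ 0 satisfy ‖X(s,p) − Xᵢ(p)‖ ≤ Mᵢ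 for all s ∈ [i/n,(i+1)/n] and all p ∈ ℝ². Then for all t ∈ [0,1] and all p ∈ ℝ²: ‖ψ(t,p) − Θᵗ(p)‖ ≤ (1/n)·(Σ_{i=0}^{n−1} Mᵢ)·e^{L}. -/
open scoped Real
open Set

noncomputable section

/-- `baseComp g i = g (i-1) ∘ ⋯ ∘ g 0` (and `baseComp g 0 = id`). -/
def baseComp (g : ℕ → E2 → E2) : ℕ → E2 → E2
  | 0 => id
  | i + 1 => g i ∘ baseComp g i

/-- The Grönwall bound is dominated by `(D + ε·x)·e^{L(a+x)}` when starting from `D·e^{La}`. -/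
lemma gron_le {L D ε a x : ℝ} (hL : 0 ≤ L) (hε : 0 ≤ ε) (ha : 0 ≤ a) (hx : 0 ≤ x) :
    gronwallBound (D * Real.exp (L * a)) L ε x ≤ (D + ε * x) * Real.exp (L * (a + x)) := by
  rcases eq_or_lt_of_le hL with h0 | hpos
  · rw [← h0]
    simp [gronwallBound_K0]
  · rw [gronwallBound_of_K_ne_0 hpos.ne']
    have key : Real.exp (L * x) - 1 ≤ (L * x) * Real.exp (L * x) := by
      have h := Real.add_one_le_exp (-(L * x))
      rw [Real.exp_neg] at h
      have hy : (1 - L * x) * Real.exp (L * x) ≤ 1 := by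
        calc (1 - L * x) * Real.exp (L * x)
            ≤ (Real.exp (L * x))⁻¹ * Real.exp (L * x) := by
              apply mul_le_mul_of_nonneg_right _ (Real.exp_pos _).le; linarith
          _ = 1 := inv_mul_cancel₀ (Real.exp_pos _).ne'
      nlinarith
    have h1 : 1 ≤ Real.exp (L * a) := Real.one_le_exp (by positivity)
    have h2 : ε / L * (Real.exp (L * x) - 1) ≤ ε * x * Real.exp (L * x) := by
      rw [div_mul_eq_mul_div, div_le_iff₀ hpos]
      calc ε * (Real.exp (L * x) - 1) ≤ ε * ((L * x) * Real.exp (L * x)) :=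
            mul_le_mul_of_nonneg_left key hε
        _ = ε * x * Real.exp (L * x) * L := by ring
    rw [mul_add, Real.exp_add]
    nlinarith [Real.exp_pos (L * x), mul_nonneg hε hx,
      mul_nonneg (by linarith : (0:ℝ) ≤ Real.exp (L * a) - 1)
        (mul_nonneg (mul_nonneg hε hx) (Real.exp_pos (L * x)).le)]

/-- The flow `ψ` of a time-dependent vector field `X` with uniform spatial Lipschitz constant `L`
is approximated by the broken flow `Θᵗ = φ^{t−i/n}_{Xᵢ} ∘ φ^{1/n}_{X_{i−1}} ∘ ⋯ ∘ φ^{1/n}_{X₀}`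
(where `Xᵢ = X(i/n,·)`): for `t ∈ [i/n,(i+1)/n]` the error is at most `(1/n)·(∑ Mᵢ)·e^L`,
where `Mᵢ` bounds `‖X(s,·) − Xᵢ‖` for `s ∈ [i/n,(i+1)/n]`. -/
theorem statement7
    (n : ℕ) (hn : 1 ≤ n)
    (X : ℝ → E2 → E2)
    (hXsm : ContDiffOn ℝ (⊤ : ℕ∞) (fun p : ℝ × E2 => X p.1 p.2) (Icc (0:ℝ) 1 ×ˢ univ))
    (hXper : ∀ t ∈ Icc (0:ℝ) 1, ∀ (x : E2) (m : Fin 2 → ℤ), X t (x + lat m) = X t x)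
    (L : ℝ)
    (hLip : ∀ t ∈ Icc (0:ℝ) 1, ∀ p q : E2, ‖X t p - X t q‖ ≤ L * ‖p - q‖)
    (ψ : ℝ → E2 → E2) (hψ0 : ∀ p, ψ 0 p = p)
    (hψ : ∀ t ∈ Icc (0:ℝ) 1, ∀ p : E2,
      HasDerivWithinAt (fun s => ψ s p) (X t (ψ t p)) (Icc (0:ℝ) 1) t)
    (φ : ℕ → ℝ → E2 → E2)
    (hφ0 : ∀ i < n, ∀ p, φ i 0 p = p)
    (hφ : ∀ i < n, ∀ (s : ℝ) (p : E2),
      HasDerivAt (fun u => φ i u p) (X ((i : ℝ) / n) (φ i s p)) s)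
    (M : ℕ → ℝ) (hM : ∀ i < n, 0 ≤ M i)
    (hMb : ∀ i < n, ∀ s ∈ Icc ((i : ℝ) / n) (((i : ℝ) + 1) / n), ∀ p : E2,
      ‖X s p - X ((i : ℝ) / n) p‖ ≤ M i) :
    ∀ i < n, ∀ t ∈ Icc ((i : ℝ) / n) (((i : ℝ) + 1) / n), ∀ p : E2,
      ‖ψ t p - φ i (t - (i : ℝ) / n) (baseComp (fun j => φ j (1 / n)) i p)‖
        ≤ (1 / n) * (∑ i ∈ Finset.range n, M i) * Real.exp L := by
  have hn0 : (0:ℝ) < n := by positivity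
  -- L is nonnegative
  have hL0 : 0 ≤ L := by
    have h := hLip 0 ⟨le_refl 0, zero_le_one⟩ 0 (EuclideanSpace.single (0 : Fin 2) (1:ℝ))
    have hnorm : ‖(0:E2) - EuclideanSpace.single (0 : Fin 2) (1:ℝ)‖ = 1 := by
      rw [zero_sub, norm_neg, EuclideanSpace.norm_single, norm_one]
    rw [hnorm, mul_one] at h
    exact le_trans (norm_nonneg _) h
  -- the endpoints of the subintervals lie in [0,1]
  have hub : ∀ i, i < n → ((i:ℝ) + 1) / n ≤ 1 := by
    intro i hi
    rw [div_le_one hn0]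
    have : (i:ℝ) + 1 ≤ (n:ℝ) := by exact_mod_cast Nat.succ_le_of_lt hi
    linarith
  have hlb : ∀ i : ℕ, (0:ℝ) ≤ (i:ℝ) / n := fun i => by positivity
  -- the main Grönwall step on one subinterval
  have step : ∀ i < n, ∀ (p q : E2) (D : ℝ),
      ‖ψ ((i:ℝ)/n) p - q‖ ≤ D * Real.exp (L * ((i:ℝ)/n)) →
      ∀ t ∈ Icc ((i:ℝ)/n) (((i:ℝ)+1)/n),
        ‖ψ t p - φ i (t - (i:ℝ)/n) q‖
          ≤ (D + M i * (t - (i:ℝ)/n)) * Real.exp (L * t) := by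
    intro i hi p q D hstart t ht
    set a : ℝ := (i:ℝ)/n with ha_def
    have ha0 : 0 ≤ a := hlb i
    have ht1 : t ≤ 1 := le_trans ht.2 (hub i hi)
    have haIcc : a ∈ Icc (0:ℝ) 1 := ⟨ha0, le_trans ht.1 ht1⟩
    have hK : LipschitzWith L.toNNReal (X a) := by
      apply LipschitzWith.of_dist_le_mul
      intro x y
      rw [dist_eq_norm, dist_eq_norm, Real.coe_toNNReal L hL0]
      exact hLip a haIcc x y
    have hg' : ∀ s : ℝ, HasDerivAt (fun u => φ i (u - a) q) (X a (φ i (s - a) q)) s := by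
      intro s
      have h1 := hφ i hi (s - a) q
      have h2 : HasDerivAt (fun u : ℝ => u - a) 1 s := (hasDerivAt_id s).sub_const a
      have h3 := h1.scomp s h2
      simpa [Function.comp_def, ← ha_def] using h3
    have main := dist_le_of_approx_trajectories_ODE
      (v := fun _ => X a) (K := L.toNNReal)
      (f := fun s => ψ s p) (f' := fun s => X s (ψ s p)) (εf := M i)
      (g := fun s => φ i (s - a) q) (g' := fun s => X a (φ i (s - a) q)) (εg := 0)
      (δ := D * Real.exp (L * a)) (a := a) (b := t)
      (fun _ => hK)
      (fun s hs => ((hψ s ⟨le_trans ha0 hs.1, le_trans hs.2 ht1⟩ p).continuousWithinAt).mono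
        (fun x hx => ⟨le_trans ha0 hx.1, le_trans hx.2 ht1⟩))
      (fun s hs => by
        have hs01 : s ∈ Icc (0:ℝ) 1 := ⟨le_trans ha0 hs.1, le_trans hs.2.le ht1⟩
        exact (hψ s hs01 p).mono_of_mem_nhdsWithin
          (Icc_mem_nhdsGE_of_mem ⟨hs01.1, lt_of_lt_of_le hs.2 ht1⟩))
      (fun s hs => by
        rw [dist_eq_norm]
        exact hMb i hi s ⟨hs.1, le_trans hs.2.le ht.2⟩ (ψ s p))
      (fun s _ => (hg' s).continuousAt.continuousWithinAt)
      (fun s _ => (hg' s).hasDerivWithinAt)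
      (fun s _ => by simp)
      (by
        simp only [dist_eq_norm, sub_self, hφ0 i hi]
        exact hstart)
      t ⟨ht.1, le_refl t⟩
    rw [dist_eq_norm] at main
    have : gronwallBound (D * Real.exp (L * a)) (L.toNNReal : ℝ) (M i + 0) (t - a)
        ≤ (D + M i * (t - a)) * Real.exp (L * t) := by
      rw [Real.coe_toNNReal L hL0, add_zero]
      have := gron_le (L := L) (D := D) (ε := M i) (a := a) (x := t - a)
        hL0 (hM i hi) ha0 (by linarith [ht.1])
      calc gronwallBound (D * Real.exp (L * a)) L (M i) (t - a)
          ≤ (D + M i * (t - a)) * Real.exp (L * (a + (t - a))) := this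
        _ = (D + M i * (t - a)) * Real.exp (L * t) := by ring_nf
    exact le_trans main this
  -- the inductive estimate
  have key : ∀ i, i < n → ∀ t ∈ Icc ((i:ℝ)/n) (((i:ℝ)+1)/n), ∀ p : E2,
      ‖ψ t p - φ i (t - (i:ℝ)/n) (baseComp (fun j => φ j (1 / n)) i p)‖
        ≤ ((∑ j ∈ Finset.range i, M j) / n + M i * (t - (i:ℝ)/n)) * Real.exp (L * t) := by
    intro i
    induction i with
    | zero =>
      intro hi t ht p
      have h0 : ((0:ℕ):ℝ)/n = 0 := by simp
      have hstart : ‖ψ (((0:ℕ):ℝ)/n) p - baseComp (fun j => φ j (1/n)) 0 p‖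
          ≤ ((∑ j ∈ Finset.range 0, M j) / n) * Real.exp (L * (((0:ℕ):ℝ)/n)) := by
        simp [baseComp, h0, hψ0 p]
      have := step 0 hi p (baseComp (fun j => φ j (1/n)) 0 p)
        ((∑ j ∈ Finset.range 0, M j) / n) hstart t ht
      simpa using this
    | succ i ih =>
      intro hi t ht p
      have hi' : i < n := Nat.lt_of_succ_lt hi
      have hprev := ih hi' (((i:ℝ)+1)/n)
        ⟨by gcongr <;> linarith, le_refl _⟩ p
      have hdiff : ((i:ℝ)+1)/n - (i:ℝ)/n = 1/n := by ring
      rw [hdiff] at hprev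
      have hcastt : ((i+1 : ℕ):ℝ) = (i:ℝ) + 1 := by push_cast; ring
      have hstart : ‖ψ (((i+1:ℕ):ℝ)/n) p - baseComp (fun j => φ j (1/n)) (i+1) p‖
          ≤ ((∑ j ∈ Finset.range (i+1), M j) / n) * Real.exp (L * (((i+1:ℕ):ℝ)/n)) := by
        have hbc : baseComp (fun j => φ j (1/n)) (i+1) p
            = φ i ((1:ℝ)/n) (baseComp (fun j => φ j (1/n)) i p) := rfl
        rw [hbc, hcastt]
        calc ‖ψ (((i:ℝ)+1)/n) p - φ i ((1:ℝ)/n) (baseComp (fun j => φ j (1/n)) i p)‖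
            ≤ ((∑ j ∈ Finset.range i, M j) / n + M i * (1/n)) * Real.exp (L * (((i:ℝ)+1)/n)) :=
              hprev
          _ = ((∑ j ∈ Finset.range (i+1), M j) / n) * Real.exp (L * (((i:ℝ)+1)/n)) := by
              rw [Finset.sum_range_succ]; ring
      exact step (i+1) hi p (baseComp (fun j => φ j (1/n)) (i+1) p)
        ((∑ j ∈ Finset.range (i+1), M j) / n) hstart t ht
  -- final assembly
  intro i hi t ht p
  have hkey := key i hi t ht p
  refine le_trans hkey ?_
  have ht1 : t ≤ 1 := le_trans ht.2 (hub i hi)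
  have hsum_nonneg : 0 ≤ ∑ j ∈ Finset.range n, M j :=
    Finset.sum_nonneg fun j hj => hM j (Finset.mem_range.mp hj)
  have hexp : Real.exp (L * t) ≤ Real.exp L := by
    apply Real.exp_le_exp.mpr
    nlinarith [hlb i, ht.1]
  have hxle : t - (i:ℝ)/n ≤ 1/n := by
    have := ht.2
    have h : ((i:ℝ)+1)/n - (i:ℝ)/n = 1/n := by ring
    linarith
  have hfac : (∑ j ∈ Finset.range i, M j) / n + M i * (t - (i:ℝ)/n)
      ≤ (1/n) * (∑ j ∈ Finset.range n, M j) := by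
    have h1 : M i * (t - (i:ℝ)/n) ≤ M i * (1/n) :=
      mul_le_mul_of_nonneg_left hxle (hM i hi)
    have h2 : (∑ j ∈ Finset.range (i+1), M j) ≤ ∑ j ∈ Finset.range n, M j := by
      apply Finset.sum_le_sum_of_subset_of_nonneg
      · exact Finset.range_subset_range.mpr hi
      · intro j hj _
        exact hM j (Finset.mem_range.mp hj)
    rw [Finset.sum_range_succ] at h2
    have h3 : (∑ j ∈ Finset.range i, M j) / n + M i * (1/n)
        = ((∑ j ∈ Finset.range i, M j) + M i) / n := by ring
    calc (∑ j ∈ Finset.range i, M j) / n + M i * (t - (i:ℝ)/n)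
        ≤ (∑ j ∈ Finset.range i, M j) / n + M i * (1/n) := by linarith
      _ = ((∑ j ∈ Finset.range i, M j) + M i) / n := h3
      _ ≤ (∑ j ∈ Finset.range n, M j) / n := by gcongr
      _ = (1/n) * (∑ j ∈ Finset.range n, M j) := by ring
  have hpos : 0 ≤ (1/(n:ℝ)) * (∑ j ∈ Finset.range n, M j) := by positivity
  exact mul_le_mul hfac hexp (Real.exp_pos _).le hpos
end
end

section
/- Let n ≥ 1 and let X₀, …, X_{n−1} and Z₀, …, Z_{n−1} be smooth (2πℤ)²-periodic vector fields on ℝ², and let L be a common Lipschitz constant for all the Xᵢ. For a smooth periodic vector field V let φˢ_V denote its flow. Define, for i/n ≤ t ≤ (i+1)/n, the broken flows Θᵗ_{(X)} := φ^{t − i/n}_{Xᵢ} ∘ φ^{1/n}_{X_{i−1}} ∘ ⋯ ∘ φ^{1/n}_{X₀} and Θᵗ_{(Z)} := φ^{t − i/n}_{Zᵢ} ∘ φ^{1/n}_{Z_{i−1}} ∘ ⋯ ∘ φ^{1/n}_{Z₀}. Let Mᵢ ≥ 0 satisfy ‖Xᵢ(p) − Zᵢ(p)‖ ≤ Mᵢ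 for all p ∈ ℝ². Then for all t ∈ [0,1] and all p ∈ ℝ²: ‖Θᵗ_{(X)}(p) − Θᵗ_{(Z)}(p)‖ ≤ (1/n)·(Σ_{i=0}^{n−1} Mᵢ)·e^{L}. -/
open scoped Real
open Set

noncomputable section

lemma gron_aux {δ K ε s : ℝ} (hK : 0 ≤ K) (hε : 0 ≤ ε) (hs : 0 ≤ s) :
    gronwallBound δ K ε s ≤ (δ + ε * s) * Real.exp (K * s) := by
  have hE1 : (1:ℝ) ≤ Real.exp (K * s) := Real.one_le_exp (mul_nonneg hK hs)
  rw [gronwallBound]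
  split_ifs with h
  · simp [h]
  · have hK' : 0 < K := hK.lt_of_ne (Ne.symm h)
    have h1 : Real.exp (-(K*s)) * Real.exp (K*s) = 1 := by rw [← Real.exp_add]; simp
    have h2 : -(K*s) + 1 ≤ Real.exp (-(K*s)) := Real.add_one_le_exp _
    have key : Real.exp (K*s) - 1 ≤ (K*s) * Real.exp (K*s) := by
      nlinarith [Real.exp_pos (K*s)]
    have h3 : ε / K * (Real.exp (K*s) - 1) ≤ ε * s * Real.exp (K*s) := by
      calc ε / K * (Real.exp (K*s) - 1) ≤ ε / K * (K * s * Real.exp (K*s)) := by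
            exact mul_le_mul_of_nonneg_left key (div_nonneg hε hK'.le)
        _ = ε * s * Real.exp (K*s) := by field_simp
    nlinarith

/-- Comparison of two broken flows: if `‖Xᵢ − Zᵢ‖ ≤ Mᵢ` uniformly and `L` is a common Lipschitz
constant for the `Xᵢ`, then the broken flows `Θᵗ_{(X)}` and `Θᵗ_{(Z)}` (flowing along
`X₀, …, X_{n−1}` resp. `Z₀, …, Z_{n−1}` on consecutive intervals of length `1/n`) differ by at
most `(1/n)·(∑ Mᵢ)·e^L` for all `t ∈ [0,1]`. -/
theorem statement8
    (n : ℕ) (hn : 1 ≤ n)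
    (X Z : ℕ → E2 → E2)
    (hXsm : ∀ i < n, ContDiff ℝ (⊤ : ℕ∞) (X i)) (hZsm : ∀ i < n, ContDiff ℝ (⊤ : ℕ∞) (Z i))
    (hXper : ∀ i < n, ∀ (x : E2) (m : Fin 2 → ℤ), X i (x + lat m) = X i x)
    (hZper : ∀ i < n, ∀ (x : E2) (m : Fin 2 → ℤ), Z i (x + lat m) = Z i x)
    (L : ℝ)
    (hLip : ∀ i < n, ∀ p q : E2, ‖X i p - X i q‖ ≤ L * ‖p - q‖)
    (φX φZ : ℕ → ℝ → E2 → E2)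
    (hφX0 : ∀ i < n, ∀ p, φX i 0 p = p) (hφZ0 : ∀ i < n, ∀ p, φZ i 0 p = p)
    (hφX : ∀ i < n, ∀ (s : ℝ) (p : E2),
      HasDerivAt (fun u => φX i u p) (X i (φX i s p)) s)
    (hφZ : ∀ i < n, ∀ (s : ℝ) (p : E2),
      HasDerivAt (fun u => φZ i u p) (Z i (φZ i s p)) s)
    (M : ℕ → ℝ) (hM : ∀ i < n, 0 ≤ M i)
    (hMb : ∀ i < n, ∀ p : E2, ‖X i p - Z i p‖ ≤ M i) :
    ∀ i < n, ∀ t ∈ Icc ((i : ℝ) / n) (((i : ℝ) + 1) / n), ∀ p : E2,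
      ‖φX i (t - (i : ℝ) / n) (baseComp (fun j => φX j (1 / n)) i p)
          - φZ i (t - (i : ℝ) / n) (baseComp (fun j => φZ j (1 / n)) i p)‖
        ≤ (1 / n) * (∑ i ∈ Finset.range n, M i) * Real.exp L := by
  have hn0 : (0:ℝ) < (n:ℝ) := by exact_mod_cast Nat.lt_of_lt_of_le Nat.zero_lt_one hn
  -- L ≥ 0
  have hL0 : 0 ≤ L := by
    have h1 : ‖(EuclideanSpace.single 0 1 : E2)‖ = 1 := by
      simp [EuclideanSpace.norm_single]
    have h2 := hLip 0 hn 0 (EuclideanSpace.single 0 1)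
    have h3 : (0:E2) - EuclideanSpace.single 0 1 = -(EuclideanSpace.single 0 1) := by abel
    rw [h3, norm_neg, h1, mul_one] at h2
    exact le_trans (norm_nonneg _) h2
  -- single-segment Gronwall estimate
  have seg : ∀ i < n, ∀ s : ℝ, 0 ≤ s → ∀ p q : E2,
      ‖φX i s p - φZ i s q‖ ≤ (‖p - q‖ + M i * s) * Real.exp (L * s) := by
    intro i hi s hs p q
    have hderiv : ∀ u : ℝ, HasDerivAt (fun u => φX i u p - φZ i u q)
        (X i (φX i u p) - Z i (φZ i u q)) u :=
      fun u => (hφX i hi u p).sub (hφZ i hi u q)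
    have hcont : ContinuousOn (fun u => φX i u p - φZ i u q) (Icc 0 s) :=
      fun u _ => (hderiv u).continuousAt.continuousWithinAt
    have hb := norm_le_gronwallBound_of_norm_deriv_right_le (δ := ‖p - q‖) (K := L)
      (ε := M i) hcont (fun u _ => (hderiv u).hasDerivWithinAt) ?_ ?_ s (right_mem_Icc.2 hs)
    · rw [sub_zero] at hb
      exact hb.trans (gron_aux hL0 (hM i hi) hs)
    · simp [hφX0 i hi, hφZ0 i hi]
    · intro u _
      have heq : X i (φX i u p) - Z i (φZ i u q)
          = (X i (φX i u p) - X i (φZ i u q)) + (X i (φZ i u q) - Z i (φZ i u q)) := by abel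
      calc ‖X i (φX i u p) - Z i (φZ i u q)‖
          ≤ ‖X i (φX i u p) - X i (φZ i u q)‖ + ‖X i (φZ i u q) - Z i (φZ i u q)‖ := by
            rw [heq]; exact norm_add_le _ _
        _ ≤ L * ‖φX i u p - φZ i u q‖ + M i :=
            add_le_add (hLip i hi _ _) (hMb i hi _)
  -- one step of the broken flow
  have step : ∀ i < n, ∀ s : ℝ, 0 ≤ s → s ≤ 1 / n → ∀ p q : E2,
      ‖p - q‖ ≤ (1/n) * (∑ j ∈ Finset.range i, M j) * Real.exp (L * ((i:ℝ)/n)) →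
      ‖φX i s p - φZ i s q‖
        ≤ (1/n) * (∑ j ∈ Finset.range (i+1), M j) * Real.exp (L * (((i:ℝ)+1)/n)) := by
    intro i hi s hs0 hs1 p q hpq
    have hA : (0:ℝ) ≤ ∑ j ∈ Finset.range i, M j :=
      Finset.sum_nonneg fun j hj => hM j (lt_of_lt_of_le (Finset.mem_range.1 hj) hi.le)
    have hE1 : (1:ℝ) ≤ Real.exp (L * ((i:ℝ)/n)) :=
      Real.one_le_exp (by positivity)
    have hE2 : (0:ℝ) < Real.exp (L * ((1:ℝ)/n)) := Real.exp_pos _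
    have hEsplit : Real.exp (L * (((i:ℝ)+1)/n))
        = Real.exp (L * ((i:ℝ)/n)) * Real.exp (L * ((1:ℝ)/n)) := by
      rw [← Real.exp_add]; congr 1; field_simp
    calc ‖φX i s p - φZ i s q‖ ≤ (‖p - q‖ + M i * s) * Real.exp (L * s) := seg i hi s hs0 p q
      _ ≤ ((1/n) * (∑ j ∈ Finset.range i, M j) * Real.exp (L * ((i:ℝ)/n)) + M i * (1/n))
            * Real.exp (L * ((1:ℝ)/n)) := by
          apply mul_le_mul (add_le_add hpq (mul_le_mul_of_nonneg_left hs1 (hM i hi)))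
            (Real.exp_le_exp.2 (mul_le_mul_of_nonneg_left hs1 hL0)) (Real.exp_pos _).le
          exact add_nonneg (mul_nonneg (mul_nonneg (by positivity) hA) (Real.exp_pos _).le) (mul_nonneg (hM i hi) (by positivity))
      _ ≤ (1/n) * (∑ j ∈ Finset.range (i+1), M j) * Real.exp (L * (((i:ℝ)+1)/n)) := by
          rw [Finset.sum_range_succ, hEsplit]
          have hMi := hM i hi
          have h1n : (0:ℝ) < 1/n := by positivity
          nlinarith [mul_nonneg (mul_nonneg (mul_nonneg h1n.le hMi) (sub_nonneg.2 hE1)) hE2.le]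
  -- distance after i full steps
  have key : ∀ i ≤ n, ∀ p : E2,
      ‖baseComp (fun j => φX j (1/n)) i p - baseComp (fun j => φZ j (1/n)) i p‖
        ≤ (1/n) * (∑ j ∈ Finset.range i, M j) * Real.exp (L * ((i:ℝ)/n)) := by
    intro i
    induction i with
    | zero => intro _ p; simp [baseComp]
    | succ i ih =>
      intro hi1 p
      have hi : i < n := hi1
      have hprev := ih hi.le p
      have h1n : (0:ℝ) ≤ 1/n := by positivity
      have := step i hi (1/n) h1n le_rfl _ _ hprev
      simpa [baseComp, Function.comp] using this
  -- conclude
  intro i hi t ht p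
  set s : ℝ := t - (i:ℝ)/n with hsdef
  have hs0 : 0 ≤ s := by simp only [hsdef]; linarith [ht.1]
  have hs1 : s ≤ 1/n := by
    have h2 : t ≤ ((i:ℝ)+1)/n := ht.2
    have : ((i:ℝ)+1)/n - (i:ℝ)/n = 1/n := by field_simp; ring
    simp only [hsdef]; linarith
  have h := step i hi s hs0 hs1 _ _ (key i hi.le p)
  refine h.trans ?_
  have hsum : (∑ j ∈ Finset.range (i+1), M j) ≤ ∑ j ∈ Finset.range n, M j := by
    apply Finset.sum_le_sum_of_subset_of_nonneg
    · exact Finset.range_subset_range.2 hi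
    · intro j hj _; exact hM j (Finset.mem_range.1 hj)
  have hexp : Real.exp (L * (((i:ℝ)+1)/n)) ≤ Real.exp L := by
    apply Real.exp_le_exp.2
    have hfrac : ((i:ℝ)+1)/n ≤ 1 := by
      rw [div_le_one hn0]
      exact_mod_cast Nat.succ_le_of_lt hi
    calc L * (((i:ℝ)+1)/n) ≤ L * 1 := mul_le_mul_of_nonneg_left hfrac hL0
      _ = L := mul_one L
  have hS : (0:ℝ) ≤ ∑ j ∈ Finset.range (i+1), M j :=
    Finset.sum_nonneg fun j hj => hM j (lt_of_lt_of_le (Finset.mem_range.1 hj) hi)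
  exact mul_le_mul (mul_le_mul_of_nonneg_left hsum (by positivity)) hexp
    (Real.exp_pos _).le (mul_nonneg (by positivity) (hS.trans hsum))
end
end
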